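/- arXiv:1910.12950 — 3 statements merged into one kernel-verified Lean document; each statement's English description precedes it below -/
import Mathlib

section
/- In the graded tensor product A_q ⊗ A_q, the elements Ξ = x⊗ξ + ξ⊗x and Θ = x⊗θ + θ⊗x satisfy Ξ·Θ = Θ·Ξ. -/
/-!
STATEMENT 4: In the graded tensor product `A_q ⊗ A_q`, the elements `Ξ = x⊗ξ + ξ⊗x` and
`Θ = x⊗θ + θ⊗x` satisfy `Ξ·Θ = Θ·Ξ`.
Here `A_q ⊗ A_q` carries the graded multiplication
`(a⊗b)(c⊗d) = (−1)^{⟨deg b, deg c⟩} ac ⊗ bd` on homogeneous elements.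
-/
open scoped TensorProduct

namespace DGQS

/-- The standard scalar product `⟨(a,b),(a',b')⟩ = aa' + bb'` on `ℤ₂ × ℤ₂`. -/
def pair2 (γ δ : ZMod 2 × ZMod 2) : ZMod 2 := γ.1 * δ.1 + γ.2 * δ.2

/-- The sign `(−1)^{⟨γ,δ⟩}`. -/
noncomputable def gsign (γ δ : ZMod 2 × ZMod 2) : ℂ := (-1 : ℂ) ^ (pair2 γ δ).val

/-- The defining relations of the double-graded quantum superplane, imposed on the free
algebra on four generators `x = ι 0`, `ξ = ι 1`, `θ = ι 2`, `z = ι 3`: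
`xξ = q ξx`, `xθ = q θx`, `xz = zx`, `ξ² = 0`, `θ² = 0`, `ξθ = θξ`,
`ξz = −q⁻¹ zξ`, `θz = −q⁻¹ zθ`. -/
inductive Rel (q : ℂ) : FreeAlgebra ℂ (Fin 4) → FreeAlgebra ℂ (Fin 4) → Prop
  | x_xi : Rel q (FreeAlgebra.ι ℂ (0 : Fin 4) * FreeAlgebra.ι ℂ (1 : Fin 4))
      (q • (FreeAlgebra.ι ℂ (1 : Fin 4) * FreeAlgebra.ι ℂ (0 : Fin 4)))
  | x_th : Rel q (FreeAlgebra.ι ℂ (0 : Fin 4) * FreeAlgebra.ι ℂ (2 : Fin 4))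
      (q • (FreeAlgebra.ι ℂ (2 : Fin 4) * FreeAlgebra.ι ℂ (0 : Fin 4)))
  | x_z : Rel q (FreeAlgebra.ι ℂ (0 : Fin 4) * FreeAlgebra.ι ℂ (3 : Fin 4))
      (FreeAlgebra.ι ℂ (3 : Fin 4) * FreeAlgebra.ι ℂ (0 : Fin 4))
  | xi_sq : Rel q (FreeAlgebra.ι ℂ (1 : Fin 4) * FreeAlgebra.ι ℂ (1 : Fin 4)) 0
  | th_sq : Rel q (FreeAlgebra.ι ℂ (2 : Fin 4) * FreeAlgebra.ι ℂ (2 : Fin 4)) 0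
  | xi_th : Rel q (FreeAlgebra.ι ℂ (1 : Fin 4) * FreeAlgebra.ι ℂ (2 : Fin 4))
      (FreeAlgebra.ι ℂ (2 : Fin 4) * FreeAlgebra.ι ℂ (1 : Fin 4))
  | xi_z : Rel q (FreeAlgebra.ι ℂ (1 : Fin 4) * FreeAlgebra.ι ℂ (3 : Fin 4))
      ((-q⁻¹) • (FreeAlgebra.ι ℂ (3 : Fin 4) * FreeAlgebra.ι ℂ (1 : Fin 4)))
  | th_z : Rel q (FreeAlgebra.ι ℂ (2 : Fin 4) * FreeAlgebra.ι ℂ (3 : Fin 4))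
      ((-q⁻¹) • (FreeAlgebra.ι ℂ (3 : Fin 4) * FreeAlgebra.ι ℂ (2 : Fin 4)))

/-- The algebra of polynomials on the double-graded quantum superplane `ℝ_q(1|𝟏)`. -/
abbrev Aq (q : ℂ) : Type := RingQuot (Rel q)

/-- The generators of `A_q`. -/
noncomputable def gen (q : ℂ) (i : Fin 4) : Aq q :=
  RingQuot.mkAlgHom ℂ (Rel q) (FreeAlgebra.ι ℂ i)

/-- The generator `x`, of degree `(0,0)`. -/
noncomputable def X (q : ℂ) : Aq q := gen q 0
/-- The generator `ξ`, of degree `(0,1)`. -/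
noncomputable def Xi (q : ℂ) : Aq q := gen q 1
/-- The generator `θ`, of degree `(1,0)`. -/
noncomputable def Th (q : ℂ) : Aq q := gen q 2
/-- The generator `z`, of degree `(1,1)`. -/
noncomputable def Zg (q : ℂ) : Aq q := gen q 3

/-- The `ℤ₂ × ℤ₂`-degrees of the generators. -/
def dg : Fin 4 → ZMod 2 × ZMod 2 := ![(0, 0), (0, 1), (1, 0), (1, 1)]

/-- The homogeneous component of degree `γ` of `A_q`: the span of the images of the
words in the generators of total degree `γ`. -/
noncomputable def grading (q : ℂ) (γ : ZMod 2 × ZMod 2) : Submodule ℂ (Aq q) :=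
  Submodule.span ℂ
    { a | ∃ w : List (Fin 4), (w.map dg).sum = γ ∧ a = (w.map (gen q)).prod }

end DGQS

/-!
The degrees of `x`, `ξ`, `θ` pair to zero with each other, so every product occurring in `Ξ·Θ`
and `Θ·Ξ` is the ungraded one. The terms `x² ⊗ ξθ` and `ξθ ⊗ x²` match by `ξθ = θξ`, and the
cross terms match because `xθ ⊗ ξx` and `θx ⊗ xξ` are both `q • (θx ⊗ ξx)`.
-/

theorem TensorProduct.mul_tmul_mul_eq_of_commute_smul {R A : Type*} [CommSemiring R]
    [Semiring A] [Algebra R A] {q : R} {x a b : A}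
    (ha : x * a = q • (a * x)) (hb : x * b = q • (b * x)) :
    (x * b) ⊗ₜ[R] (a * x) = (b * x) ⊗ₜ[R] (x * a) := by
  rw [ha, hb, TensorProduct.smul_tmul]

namespace DGQS

theorem gen_mem_grading (q : ℂ) (i : Fin 4) : gen q i ∈ grading q (dg i) :=
  Submodule.subset_span ⟨[i], by simp, by simp⟩

theorem X_mem_grading (q : ℂ) : X q ∈ grading q (0, 0) := gen_mem_grading q 0

theorem Xi_mem_grading (q : ℂ) : Xi q ∈ grading q (0, 1) := gen_mem_grading q 1

theorem Th_mem_grading (q : ℂ) : Th q ∈ grading q (1, 0) := gen_mem_grading q 2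

theorem X_mul_Xi (q : ℂ) : X q * Xi q = q • (Xi q * X q) := by
  simpa [X, Xi, gen] using RingQuot.mkAlgHom_rel ℂ (Rel.x_xi (q := q))

theorem X_mul_Th (q : ℂ) : X q * Th q = q • (Th q * X q) := by
  simpa [X, Th, gen] using RingQuot.mkAlgHom_rel ℂ (Rel.x_th (q := q))

theorem Xi_mul_Th (q : ℂ) : Xi q * Th q = Th q * Xi q := by
  simpa [Xi, Th, gen] using RingQuot.mkAlgHom_rel ℂ (Rel.xi_th (q := q))

end DGQS

open DGQS in
theorem statement4_general (q : ℂ)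
    (gmul : (Aq q ⊗[ℂ] Aq q) →ₗ[ℂ] (Aq q ⊗[ℂ] Aq q) →ₗ[ℂ] (Aq q ⊗[ℂ] Aq q))
    (hgmul : ∀ {γ δ : ZMod 2 × ZMod 2} {b c : Aq q},
      b ∈ grading q γ → c ∈ grading q δ → ∀ a d : Aq q,
        gmul (a ⊗ₜ[ℂ] b) (c ⊗ₜ[ℂ] d) = gsign γ δ • ((a * c) ⊗ₜ[ℂ] (b * d))) :
    gmul (X q ⊗ₜ[ℂ] Xi q + Xi q ⊗ₜ[ℂ] X q) (X q ⊗ₜ[ℂ] Th q + Th q ⊗ₜ[ℂ] X q)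
      = gmul (X q ⊗ₜ[ℂ] Th q + Th q ⊗ₜ[ℂ] X q) (X q ⊗ₜ[ℂ] Xi q + Xi q ⊗ₜ[ℂ] X q) := by
  have hmul : ∀ {γ δ : ZMod 2 × ZMod 2} {b c : Aq q}, b ∈ grading q γ → c ∈ grading q δ →
      pair2 γ δ = 0 → ∀ a d : Aq q, gmul (a ⊗ₜ[ℂ] b) (c ⊗ₜ[ℂ] d) = (a * c) ⊗ₜ[ℂ] (b * d) := by
    intro γ δ b c hb hc h a d
    rw [hgmul hb hc, gsign, h, ZMod.val_zero, pow_zero, one_smul]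
  have hx := X_mem_grading q
  have hξ := Xi_mem_grading q
  have hθ := Th_mem_grading q
  simp only [map_add, LinearMap.add_apply, hmul hx hx rfl, hmul hx hξ rfl, hmul hx hθ rfl,
    hmul hξ hx rfl, hmul hξ hθ rfl, hmul hθ hx rfl, hmul hθ hξ rfl]
  rw [Xi_mul_Th, TensorProduct.mul_tmul_mul_eq_of_commute_smul (X_mul_Xi q) (X_mul_Th q),
    TensorProduct.mul_tmul_mul_eq_of_commute_smul (X_mul_Th q) (X_mul_Xi q)]
  abel

open DGQS in
theorem statement4 (q : ℂ) (hq : q ≠ 0) (hqroot : ∀ n : ℕ, 0 < n → q ^ n ≠ 1)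
    (gmul : (Aq q ⊗[ℂ] Aq q) →ₗ[ℂ] (Aq q ⊗[ℂ] Aq q) →ₗ[ℂ] (Aq q ⊗[ℂ] Aq q))
    (hgmul : ∀ {γ δ : ZMod 2 × ZMod 2} {b c : Aq q},
      b ∈ grading q γ → c ∈ grading q δ → ∀ a d : Aq q,
        gmul (a ⊗ₜ[ℂ] b) (c ⊗ₜ[ℂ] d) = gsign γ δ • ((a * c) ⊗ₜ[ℂ] (b * d))) :
    gmul (X q ⊗ₜ[ℂ] Xi q + Xi q ⊗ₜ[ℂ] X q) (X q ⊗ₜ[ℂ] Th q + Th q ⊗ₜ[ℂ] X q)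
      = gmul (X q ⊗ₜ[ℂ] Th q + Th q ⊗ₜ[ℂ] X q) (X q ⊗ₜ[ℂ] Xi q + Xi q ⊗ₜ[ℂ] X q) :=
  statement4_general q gmul hgmul
end

section
/- The algebra morphisms Δ : A_q → A_q ⊗ A_q and ε : A_q → ℂ determined by Δ(x) = x⊗x, Δ(ξ) = x⊗ξ + ξ⊗x, Δ(θ) = x⊗θ + θ⊗x, Δ(z) = x⊗z + z⊗x, ε(x) = 1, ε(ξ) = ε(θ) = ε(z) = 0 make A_q a cocommutative ℤ₂×ℤ₂-graded bialgebra: (Δ ⊗ Id)∘Δ = (Id ⊗ Δ)∘Δ, (ε ⊗ Id)∘Δ = Id = (Id ⊗ ε)∘Δ (under the identifications ℂ ⊗ A_q ≅ A_q ≅ A_q ⊗ ℂ), and σ∘Δ = Δ, where σ(a⊗b) = (−1)^{⟨deg a, deg b⟩} b⊗a. -/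
/-!
STATEMENT 6: The algebra morphisms `Δ : A_q → A_q ⊗ A_q` and `ε : A_q → ℂ` determined by
`Δ(x) = x⊗x`, `Δ(ξ) = x⊗ξ + ξ⊗x`, `Δ(θ) = x⊗θ + θ⊗x`, `Δ(z) = x⊗z + z⊗x`, `ε(x) = 1`,
`ε(ξ) = ε(θ) = ε(z) = 0` make `A_q` a cocommutative `ℤ₂ × ℤ₂`-graded bialgebra:
`(Δ ⊗ Id)∘Δ = (Id ⊗ Δ)∘Δ`, `(ε ⊗ Id)∘Δ = Id = (Id ⊗ ε)∘Δ` (under the identifications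
`ℂ ⊗ A_q ≅ A_q ≅ A_q ⊗ ℂ`), and `σ∘Δ = Δ`, where `σ(a⊗b) = (−1)^{⟨deg a, deg b⟩} b⊗a`
on homogeneous elements.  The graded tensor product `A_q ⊗ A_q` carries the multiplication
`(a⊗b)(c⊗d) = (−1)^{⟨deg b, deg c⟩} ac ⊗ bd` on homogeneous elements, and `Δ`, `ε` are
assumed well defined as algebra morphisms.
-/
open scoped TensorProduct

/-!
Every element of `A_q` is a linear combination of words in the generators, so two linear maps
out of `A_q` agree as soon as they agree at `1` and intertwine left multiplication by each
generator `g` with one and the same operator. Since `Δ` is multiplicative, this holds for each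
identity: for the counit axioms the operator is left multiplication by `g` (the counit kills every
word of nonzero degree, so the signs of the graded product disappear); for cocommutativity it is
graded left multiplication by `Δ g` (`σ` is multiplicative for the graded product and fixes each
`Δ g`); for coassociativity it is graded left multiplication by
`x ⊗ x ⊗ g + x ⊗ g ⊗ x + g ⊗ x ⊗ x` in the triple tensor product.
-/

open TensorProduct

namespace DGQS

section Sign

lemma neg_one_pow_val_add (a b : ZMod 2) :
    (-1 : ℂ) ^ (a + b).val = (-1) ^ a.val * (-1) ^ b.val := by
  have h : (a + b).val % 2 = (a.val + b.val) % 2 := by revert a b; decide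
  rw [neg_one_pow_eq_pow_mod_two, h, ← neg_one_pow_eq_pow_mod_two, pow_add]

lemma gsign_add_left (α β δ : ZMod 2 × ZMod 2) :
    gsign (α + β) δ = gsign α δ * gsign β δ := by
  have h : pair2 (α + β) δ = pair2 α δ + pair2 β δ := by
    simp only [pair2, Prod.fst_add, Prod.snd_add]
    ring
  rw [gsign, h, neg_one_pow_val_add, gsign, gsign]

lemma gsign_comm (γ δ : ZMod 2 × ZMod 2) : gsign γ δ = gsign δ γ := by
  simp only [gsign, pair2, mul_comm]

lemma gsign_add_right (α β δ : ZMod 2 × ZMod 2) :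
    gsign α (β + δ) = gsign α β * gsign α δ := by
  rw [gsign_comm, gsign_add_left, gsign_comm β, gsign_comm δ]

@[simp] lemma gsign_zero_left (δ : ZMod 2 × ZMod 2) : gsign 0 δ = 1 := by
  simp [gsign, pair2]

@[simp] lemma gsign_zero_right (γ : ZMod 2 × ZMod 2) : gsign γ 0 = 1 := by
  simp [gsign, pair2]

lemma gsign_mul_self (γ δ : ZMod 2 × ZMod 2) : gsign γ δ * gsign γ δ = 1 := by
  rw [gsign, ← pow_add, ← two_mul, pow_mul, neg_one_sq, one_pow]

lemma gsign_mul_gsign_add_add (a b c d : ZMod 2 × ZMod 2) :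
    gsign b c * gsign (a + c) (b + d) = gsign a b * gsign c d * gsign a d := by
  rw [gsign_add_left, gsign_add_right, gsign_add_right, gsign_comm c b]
  linear_combination (gsign a b * gsign a d * gsign c d) * gsign_mul_self b c

end Sign

variable {q : ℂ}

section Words

noncomputable def word (q : ℂ) (w : List (Fin 4)) : Aq q := (w.map (gen q)).prod

def wordDeg (w : List (Fin 4)) : ZMod 2 × ZMod 2 := (w.map dg).sum

@[simp] lemma word_nil : word q [] = 1 := rfl

lemma word_cons (i : Fin 4) (w : List (Fin 4)) : word q (i :: w) = gen q i * word q w :=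
  List.prod_cons

lemma word_append (u v : List (Fin 4)) : word q (u ++ v) = word q u * word q v := by
  simp [word]

lemma word_cons' (i : Fin 4) (w : List (Fin 4)) : word q (i :: w) = word q [i] * word q w :=
  word_append [i] w

lemma word_singleton (i : Fin 4) : word q [i] = gen q i := by
  simp [word]

lemma X_eq_word : X q = word q [0] := (word_singleton 0).symm

lemma gen_eq_word (i : Fin 4) : gen q i = word q [i] := (word_singleton i).symm

@[simp] lemma wordDeg_nil : wordDeg [] = 0 := rfl

@[simp] lemma wordDeg_cons (i : Fin 4) (w : List (Fin 4)) :
    wordDeg (i :: w) = dg i + wordDeg w :=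
  List.sum_cons

lemma wordDeg_append (u v : List (Fin 4)) : wordDeg (u ++ v) = wordDeg u + wordDeg v := by
  simp [wordDeg]

@[simp] lemma dg_zero : dg 0 = 0 := rfl

lemma word_mem_grading (w : List (Fin 4)) : word q w ∈ grading q (wordDeg w) :=
  Submodule.subset_span ⟨w, rfl, rfl⟩

lemma span_range_word : Submodule.span ℂ (Set.range (word q)) = ⊤ := by
  have hgen : Algebra.adjoin ℂ (Set.range (gen q)) = ⊤ := by
    have : Set.range (gen q) = RingQuot.mkAlgHom ℂ (Rel q) '' Set.range (FreeAlgebra.ι ℂ) :=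
      Set.range_comp _ _
    rw [this, ← AlgHom.map_adjoin, FreeAlgebra.adjoin_range_ι, Algebra.map_top,
      AlgHom.range_eq_top]
    exact RingQuot.mkAlgHom_surjective ℂ (Rel q)
  rw [eq_top_iff, ← Algebra.top_toSubmodule, ← hgen, Algebra.adjoin_eq_span]
  refine Submodule.span_mono fun a ha => ?_
  induction ha using Submonoid.closure_induction with
  | mem a h =>
    obtain ⟨i, rfl⟩ := h
    exact ⟨[i], word_singleton i⟩
  | one => exact ⟨[], rfl⟩
  | mul a b _ _ ha hb =>
    obtain ⟨u, rfl⟩ := ha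
    obtain ⟨v, rfl⟩ := hb
    exact ⟨u ++ v, word_append u v⟩

variable {M : Type*} [AddCommMonoid M] [Module ℂ M]

lemma linearMap_ext_word {F G : Aq q →ₗ[ℂ] M} (h : ∀ w, F (word q w) = G (word q w)) :
    F = G :=
  LinearMap.ext_on_range span_range_word h

lemma linearMap_ext_wordTensor {F G : Aq q ⊗[ℂ] Aq q →ₗ[ℂ] M}
    (h : ∀ u v, F (word q u ⊗ₜ word q v) = G (word q u ⊗ₜ word q v)) : F = G :=
  TensorProduct.ext (linearMap_ext_word fun u => linearMap_ext_word fun v => h u v)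

lemma linearMap_ext_wordTensor₂ {F G : Aq q ⊗[ℂ] Aq q →ₗ[ℂ] Aq q ⊗[ℂ] Aq q →ₗ[ℂ] M}
    (h : ∀ u v s t, F (word q u ⊗ₜ word q v) (word q s ⊗ₜ word q t)
      = G (word q u ⊗ₜ word q v) (word q s ⊗ₜ word q t)) : F = G :=
  linearMap_ext_wordTensor fun u v => linearMap_ext_wordTensor fun s t => h u v s t

lemma linearMap_ext_of_gen_mul {F G : Aq q →ₗ[ℂ] M} (φ : Fin 4 → M → M) (h₁ : F 1 = G 1)
    (hF : ∀ i a, F (gen q i * a) = φ i (F a)) (hG : ∀ i a, G (gen q i * a) = φ i (G a)) :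
    F = G := by
  refine linearMap_ext_word fun w => ?_
  induction w with
  | nil => exact h₁
  | cons i w ih => rw [word_cons, hF, hG, ih]

end Words

def IsGradedMul (gmul : Aq q ⊗[ℂ] Aq q →ₗ[ℂ] Aq q ⊗[ℂ] Aq q →ₗ[ℂ] Aq q ⊗[ℂ] Aq q) : Prop :=
  ∀ {γ δ : ZMod 2 × ZMod 2} {b c : Aq q}, b ∈ grading q γ → c ∈ grading q δ → ∀ a d : Aq q,
    gmul (a ⊗ₜ[ℂ] b) (c ⊗ₜ[ℂ] d) = gsign γ δ • ((a * c) ⊗ₜ[ℂ] (b * d))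

def IsGradedFlip (σ : Aq q ⊗[ℂ] Aq q →ₗ[ℂ] Aq q ⊗[ℂ] Aq q) : Prop :=
  ∀ {γ δ : ZMod 2 × ZMod 2} {a b : Aq q}, a ∈ grading q γ → b ∈ grading q δ →
    σ (a ⊗ₜ[ℂ] b) = gsign γ δ • (b ⊗ₜ[ℂ] a)

structure IsCoproduct (gmul : Aq q ⊗[ℂ] Aq q →ₗ[ℂ] Aq q ⊗[ℂ] Aq q →ₗ[ℂ] Aq q ⊗[ℂ] Aq q)
    (Δ : Aq q →ₗ[ℂ] Aq q ⊗[ℂ] Aq q) : Prop where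
  map_one : Δ 1 = 1 ⊗ₜ 1
  map_mul : ∀ a b, Δ (a * b) = gmul (Δ a) (Δ b)
  map_X : Δ (X q) = X q ⊗ₜ X q
  map_gen : ∀ i ≠ 0, Δ (gen q i) = X q ⊗ₜ gen q i + gen q i ⊗ₜ X q

variable {gmul : Aq q ⊗[ℂ] Aq q →ₗ[ℂ] Aq q ⊗[ℂ] Aq q →ₗ[ℂ] Aq q ⊗[ℂ] Aq q}
  {Δ : Aq q →ₗ[ℂ] Aq q ⊗[ℂ] Aq q}

lemma IsGradedMul.word (hgmul : IsGradedMul gmul) (u v s t : List (Fin 4)) :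
    gmul (word q u ⊗ₜ word q v) (word q s ⊗ₜ word q t)
      = gsign (wordDeg v) (wordDeg s) • (word q (u ++ s) ⊗ₜ word q (v ++ t)) := by
  rw [hgmul (word_mem_grading v) (word_mem_grading s), word_append, word_append]

lemma IsGradedFlip.word {σ : Aq q ⊗[ℂ] Aq q →ₗ[ℂ] Aq q ⊗[ℂ] Aq q} (hσ : IsGradedFlip σ)
    (u v : List (Fin 4)) :
    σ (word q u ⊗ₜ word q v) = gsign (wordDeg u) (wordDeg v) • (word q v ⊗ₜ word q u) :=
  hσ (word_mem_grading u) (word_mem_grading v)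

section Counit

variable {ε : Aq q →ₐ[ℂ] ℂ}

lemma wordDeg_eq_zero_of_counit_ne_zero (hε : ∀ i ≠ 0, ε (gen q i) = 0) {w : List (Fin 4)}
    (h : ε (word q w) ≠ 0) : wordDeg w = 0 := by
  induction w with
  | nil => rfl
  | cons i w ih =>
    rw [word_cons, map_mul, mul_ne_zero_iff] at h
    obtain rfl : i = 0 := not_imp_comm.mp (hε i) h.1
    rw [wordDeg_cons, ih h.2, dg_zero, add_zero]

lemma gsign_mul_counit_word (hε : ∀ i ≠ 0, ε (gen q i) = 0) (γ : ZMod 2 × ZMod 2)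
    (w : List (Fin 4)) : gsign γ (wordDeg w) * ε (word q w) = ε (word q w) := by
  by_cases h : ε (word q w) = 0
  · rw [h, mul_zero]
  · rw [wordDeg_eq_zero_of_counit_ne_zero hε h, gsign_zero_right, one_mul]

lemma lid_counit_gmul (hgmul : IsGradedMul gmul) (hε : ∀ i ≠ 0, ε (gen q i) = 0)
    (t₁ t₂ : Aq q ⊗[ℂ] Aq q) :
    TensorProduct.lid ℂ (Aq q) (TensorProduct.map ε.toLinearMap LinearMap.id (gmul t₁ t₂))
      = TensorProduct.lid ℂ (Aq q) (TensorProduct.map ε.toLinearMap LinearMap.id t₁)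
        * TensorProduct.lid ℂ (Aq q) (TensorProduct.map ε.toLinearMap LinearMap.id t₂) := by
  let E := (TensorProduct.lid ℂ (Aq q)).toLinearMap ∘ₗ
    TensorProduct.map ε.toLinearMap LinearMap.id
  have h : gmul.compr₂ E = (LinearMap.mul ℂ (Aq q)).compl₁₂ E E :=
    linearMap_ext_wordTensor₂ fun u v s t => by
      simp only [E, LinearMap.compr₂_apply, LinearMap.compl₁₂_apply, LinearMap.mul_apply',
        hgmul.word, LinearMap.coe_comp, Function.comp_apply, map_smul, map_tmul]
      simp [word_append, smul_smul, mul_left_comm _ (ε _), gsign_mul_counit_word hε, mul_comm]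
  exact LinearMap.congr_fun₂ h t₁ t₂

lemma rid_counit_gmul (hgmul : IsGradedMul gmul) (hε : ∀ i ≠ 0, ε (gen q i) = 0)
    (t₁ t₂ : Aq q ⊗[ℂ] Aq q) :
    TensorProduct.rid ℂ (Aq q) (TensorProduct.map LinearMap.id ε.toLinearMap (gmul t₁ t₂))
      = TensorProduct.rid ℂ (Aq q) (TensorProduct.map LinearMap.id ε.toLinearMap t₁)
        * TensorProduct.rid ℂ (Aq q) (TensorProduct.map LinearMap.id ε.toLinearMap t₂) := by
  let E := (TensorProduct.rid ℂ (Aq q)).toLinearMap ∘ₗ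
    TensorProduct.map LinearMap.id ε.toLinearMap
  have h : gmul.compr₂ E = (LinearMap.mul ℂ (Aq q)).compl₁₂ E E :=
    linearMap_ext_wordTensor₂ fun u v s t => by
      simp only [E, LinearMap.compr₂_apply, LinearMap.compl₁₂_apply, LinearMap.mul_apply',
        hgmul.word, LinearMap.coe_comp, Function.comp_apply, map_smul, map_tmul]
      simp [word_append, smul_smul, ← mul_assoc, gsign_comm (wordDeg v),
        gsign_mul_counit_word hε, mul_comm]
  exact LinearMap.congr_fun₂ h t₁ t₂

theorem lid_counit_comp_delta (hgmul : IsGradedMul gmul) (hΔ : IsCoproduct gmul Δ)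
    (hεx : ε (X q) = 1) (hε : ∀ i ≠ 0, ε (gen q i) = 0) :
    (TensorProduct.lid ℂ (Aq q)).toLinearMap.comp
      ((TensorProduct.map ε.toLinearMap LinearMap.id).comp Δ) = LinearMap.id := by
  refine linearMap_ext_of_gen_mul (fun i a => gen q i * a) (by simp [hΔ.map_one])
    (fun i a => ?_) fun i a => rfl
  have hgen : TensorProduct.lid ℂ (Aq q) (TensorProduct.map ε.toLinearMap LinearMap.id
      (Δ (gen q i))) = gen q i := by
    rcases eq_or_ne i 0 with rfl | hi
    · rw [← X, hΔ.map_X]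
      simp [hεx]
    · simp [hΔ.map_gen i hi, hεx, hε i hi]
  simp [hΔ.map_mul, lid_counit_gmul hgmul hε, hgen]

theorem rid_counit_comp_delta (hgmul : IsGradedMul gmul) (hΔ : IsCoproduct gmul Δ)
    (hεx : ε (X q) = 1) (hε : ∀ i ≠ 0, ε (gen q i) = 0) :
    (TensorProduct.rid ℂ (Aq q)).toLinearMap.comp
      ((TensorProduct.map LinearMap.id ε.toLinearMap).comp Δ) = LinearMap.id := by
  refine linearMap_ext_of_gen_mul (fun i a => gen q i * a) (by simp [hΔ.map_one])
    (fun i a => ?_) fun i a => rfl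
  have hgen : TensorProduct.rid ℂ (Aq q) (TensorProduct.map LinearMap.id ε.toLinearMap
      (Δ (gen q i))) = gen q i := by
    rcases eq_or_ne i 0 with rfl | hi
    · rw [← X, hΔ.map_X]
      simp [hεx]
    · simp [hΔ.map_gen i hi, hεx, hε i hi]
  simp [hΔ.map_mul, rid_counit_gmul hgmul hε, hgen]

end Counit

section Cocommutativity

variable {σ : Aq q ⊗[ℂ] Aq q →ₗ[ℂ] Aq q ⊗[ℂ] Aq q}

lemma IsGradedFlip.map_gmul (hσ : IsGradedFlip σ) (hgmul : IsGradedMul gmul)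
    (t₁ t₂ : Aq q ⊗[ℂ] Aq q) : σ (gmul t₁ t₂) = gmul (σ t₁) (σ t₂) := by
  have h : gmul.compr₂ σ = gmul.compl₁₂ σ σ :=
    linearMap_ext_wordTensor₂ fun u v s t => by
      simp only [LinearMap.compr₂_apply, LinearMap.compl₁₂_apply, hgmul.word, hσ.word,
        map_smul, LinearMap.smul_apply, smul_smul, wordDeg_append, gsign_mul_gsign_add_add]
      congr 1
      ring
  exact LinearMap.congr_fun₂ h t₁ t₂

theorem IsGradedFlip.comp_delta (hσ : IsGradedFlip σ) (hgmul : IsGradedMul gmul)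
    (hΔ : IsCoproduct gmul Δ) : σ.comp Δ = Δ := by
  refine linearMap_ext_of_gen_mul (fun i => gmul (Δ (gen q i))) ?_ (fun i a => ?_)
    fun i a => hΔ.map_mul _ _
  · rw [LinearMap.comp_apply, hΔ.map_one, ← word_nil, hσ.word]
    simp
  have hgen : σ (Δ (gen q i)) = Δ (gen q i) := by
    rcases eq_or_ne i 0 with rfl | hi
    · rw [← X, hΔ.map_X, X_eq_word, hσ.word]
      simp
    · rw [hΔ.map_gen i hi, map_add, X_eq_word, gen_eq_word, hσ.word, hσ.word]
      simp [add_comm]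
  rw [LinearMap.comp_apply, hΔ.map_mul, hσ.map_gmul hgmul, hgen]
  rfl

end Cocommutativity

section Coassociativity

def wordTensors (q : ℂ) (γ : ZMod 2 × ZMod 2) : Set (Aq q ⊗[ℂ] Aq q) :=
  {t | ∃ u v, wordDeg u + wordDeg v = γ ∧ word q u ⊗ₜ word q v = t}

lemma gmul_mem_span_wordTensors (hgmul : IsGradedMul gmul) {α β : ZMod 2 × ZMod 2}
    {t₁ t₂ : Aq q ⊗[ℂ] Aq q} (h₁ : t₁ ∈ Submodule.span ℂ (wordTensors q α))
    (h₂ : t₂ ∈ Submodule.span ℂ (wordTensors q β)) :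
    gmul t₁ t₂ ∈ Submodule.span ℂ (wordTensors q (α + β)) := by
  have h := Submodule.apply_mem_map₂ gmul h₁ h₂
  rw [Submodule.map₂_span_span] at h
  refine Submodule.span_le.mpr ?_ h
  rintro _ ⟨_, ⟨u, v, rfl, rfl⟩, _, ⟨s, t, rfl, rfl⟩, rfl⟩
  dsimp only
  rw [hgmul.word]
  refine Submodule.smul_mem _ _ (Submodule.subset_span ⟨u ++ s, v ++ t, ?_, rfl⟩)
  simp only [wordDeg_append]
  abel

lemma IsCoproduct.word_mem_span_wordTensors (hgmul : IsGradedMul gmul)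
    (hΔ : IsCoproduct gmul Δ) (w : List (Fin 4)) :
    Δ (word q w) ∈ Submodule.span ℂ (wordTensors q (wordDeg w)) := by
  have mem {u v : List (Fin 4)} {γ} (h : wordDeg u + wordDeg v = γ) :
      word q u ⊗ₜ word q v ∈ Submodule.span ℂ (wordTensors q γ) :=
    Submodule.subset_span ⟨u, v, h, rfl⟩
  induction w with
  | nil => simpa [hΔ.map_one] using mem (u := []) (v := []) rfl
  | cons i w ih =>
    rw [word_cons, hΔ.map_mul, wordDeg_cons]
    refine gmul_mem_span_wordTensors hgmul ?_ ih
    rcases eq_or_ne i 0 with rfl | hi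
    · rw [← X, hΔ.map_X, X_eq_word]
      exact mem (by simp)
    · rw [hΔ.map_gen i hi, X_eq_word, gen_eq_word]
      exact add_mem (mem (by simp)) (mem (by simp))

variable (gmul Δ) in
/-- Left multiplication by `(id ⊗ Δ) P` in the graded tensor product `A_q ⊗ (A_q ⊗ A_q)`,
built from `gmul` alone: for `P = p ⊗ r` and a homogeneous `a`, `gmul P (a ⊗ 1)` is
`± p a ⊗ r`, the sign being that of moving `r` past `a`, and `a ⊗ T` is sent to
`± p a ⊗ gmul (Δ r) T`. -/
noncomputable def mulLeftTriple :
    Aq q ⊗[ℂ] Aq q →ₗ[ℂ] Aq q ⊗[ℂ] (Aq q ⊗[ℂ] Aq q) →ₗ[ℂ] Aq q ⊗[ℂ] (Aq q ⊗[ℂ] Aq q) :=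
  LinearMap.llcomp ℂ _ _ _ (LinearMap.lTensor (Aq q) (TensorProduct.lift (gmul ∘ₗ Δ)) ∘ₗ
      (TensorProduct.assoc ℂ (Aq q) (Aq q) (Aq q ⊗[ℂ] Aq q)).toLinearMap) ∘ₗ
    LinearMap.rTensorHom (Aq q ⊗[ℂ] Aq q) ∘ₗ
    LinearMap.lcomp ℂ _ ((TensorProduct.mk ℂ (Aq q) (Aq q)).flip 1) ∘ₗ gmul

lemma mulLeftTriple_word (hgmul : IsGradedMul gmul) (s r u : List (Fin 4))
    (T : Aq q ⊗[ℂ] Aq q) :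
    mulLeftTriple gmul Δ (word q s ⊗ₜ word q r) (word q u ⊗ₜ T)
      = gsign (wordDeg r) (wordDeg u) • (word q (s ++ u) ⊗ₜ gmul (Δ (word q r)) T) := by
  simp [mulLeftTriple]
  rw [← word_nil, hgmul.word]
  simp [← smul_tmul']

lemma gmul_X_tmul_X (hgmul : IsGradedMul gmul) :
    gmul (X q ⊗ₜ X q)
      = TensorProduct.map (LinearMap.mulLeft ℂ (X q)) (LinearMap.mulLeft ℂ (X q)) :=
  linearMap_ext_wordTensor fun u v => by
    rw [X_eq_word, hgmul.word]
    simp [word_cons]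

lemma mulLeftTriple_X_tmul_X (hgmul : IsGradedMul gmul) (hΔx : Δ (X q) = X q ⊗ₜ X q) :
    mulLeftTriple gmul Δ (X q ⊗ₜ X q) = TensorProduct.map (LinearMap.mulLeft ℂ (X q))
      (TensorProduct.map (LinearMap.mulLeft ℂ (X q)) (LinearMap.mulLeft ℂ (X q))) :=
  TensorProduct.ext (linearMap_ext_word fun u => LinearMap.ext fun T => by
    rw [LinearMap.compr₂ₛₗ_apply, TensorProduct.mk_apply, X_eq_word, mulLeftTriple_word hgmul,
      ← X_eq_word, hΔx, gmul_X_tmul_X hgmul]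
    simp
    rfl)

lemma lTensor_delta_gmul (hgmul : IsGradedMul gmul)
    (hΔmul : ∀ a b, Δ (a * b) = gmul (Δ a) (Δ b)) (P t : Aq q ⊗[ℂ] Aq q) :
    TensorProduct.map LinearMap.id Δ (gmul P t)
      = mulLeftTriple gmul Δ P (TensorProduct.map LinearMap.id Δ t) := by
  have h : gmul.compr₂ (TensorProduct.map LinearMap.id Δ)
      = (mulLeftTriple gmul Δ).compl₂ (TensorProduct.map LinearMap.id Δ) :=
    linearMap_ext_wordTensor₂ fun s r u v => by
      simp [hgmul.word, mulLeftTriple_word hgmul, word_append, hΔmul]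
  exact LinearMap.congr_fun₂ h P t

lemma assoc_rTensor_delta_gmul_X (hgmul : IsGradedMul gmul)
    (hΔmul : ∀ a b, Δ (a * b) = gmul (Δ a) (Δ b)) (hΔx : Δ (X q) = X q ⊗ₜ X q)
    (t : Aq q ⊗[ℂ] Aq q) :
    TensorProduct.assoc ℂ _ _ _ (TensorProduct.map Δ LinearMap.id (gmul (Δ (X q)) t))
      = mulLeftTriple gmul Δ (Δ (X q))
          (TensorProduct.assoc ℂ _ _ _ (TensorProduct.map Δ LinearMap.id t)) := by
  have hΔX_mul (a : Aq q) : Δ (X q * a) = TensorProduct.map (LinearMap.mulLeft ℂ (X q))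
      (LinearMap.mulLeft ℂ (X q)) (Δ a) := by
    rw [hΔmul, hΔx, gmul_X_tmul_X hgmul]
  rw [hΔx, gmul_X_tmul_X hgmul, mulLeftTriple_X_tmul_X hgmul hΔx]
  induction t using TensorProduct.induction_on with
  | zero => simp
  | tmul a b => simp [hΔX_mul, TensorProduct.map_map_assoc]
  | add t t' h h' => simp only [map_add, h, h']

lemma IsCoproduct.map_word_zero (hΔ : IsCoproduct gmul Δ) :
    Δ (word q [0]) = word q [0] ⊗ₜ word q [0] := by
  rw [← X_eq_word, hΔ.map_X]

lemma IsCoproduct.map_word_singleton (hΔ : IsCoproduct gmul Δ) {i : Fin 4} (hi : i ≠ 0) :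
    Δ (word q [i]) = word q [0] ⊗ₜ word q [i] + word q [i] ⊗ₜ word q [0] := by
  rw [← X_eq_word, ← gen_eq_word, hΔ.map_gen i hi]

-- In use `s = Δ u`, and `gsign (dg i) γ` is the sign of moving `gen q i` past `u`; since
-- `grading q` is not known to be a direct sum, the degree `γ` is carried along with `s`.
lemma assoc_gmul_delta_tmul_of_mem_span (hgmul : IsGradedMul gmul) (hΔ : IsCoproduct gmul Δ)
    {i : Fin 4} (hi : i ≠ 0) {γ : ZMod 2 × ZMod 2} {s : Aq q ⊗[ℂ] Aq q}
    (hs : s ∈ Submodule.span ℂ (wordTensors q γ)) (v : List (Fin 4)) :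
    gsign (dg i) γ • TensorProduct.assoc ℂ _ _ _ (gmul (Δ (word q [0])) s ⊗ₜ word q (i :: v))
        + TensorProduct.assoc ℂ _ _ _ (gmul (Δ (word q [i])) s ⊗ₜ word q (0 :: v))
      = mulLeftTriple gmul Δ (Δ (word q [i])) (TensorProduct.assoc ℂ _ _ _ (s ⊗ₜ word q v)) := by
  induction hs using Submodule.span_induction with
  | mem s hs =>
    obtain ⟨a, b, rfl, rfl⟩ := hs
    simp [hgmul.word, mulLeftTriple_word hgmul, hΔ.map_word_zero, hΔ.map_word_singleton hi,
      add_tmul, tmul_add, ← smul_tmul', smul_add, smul_smul, gsign_add_right, add_assoc]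
  | zero => simp
  | add s s' _ _ h h' =>
    simp only [map_add, add_tmul, smul_add, ← h, ← h']
    abel
  | smul c s _ h =>
    simp only [map_smul, ← smul_tmul', ← h]
    module

lemma assoc_rTensor_delta_gmul_of_ne_zero (hgmul : IsGradedMul gmul)
    (hΔ : IsCoproduct gmul Δ) {i : Fin 4} (hi : i ≠ 0) (t : Aq q ⊗[ℂ] Aq q) :
    TensorProduct.assoc ℂ _ _ _ (TensorProduct.map Δ LinearMap.id (gmul (Δ (gen q i)) t))
      = mulLeftTriple gmul Δ (Δ (gen q i))
          (TensorProduct.assoc ℂ _ _ _ (TensorProduct.map Δ LinearMap.id t)) := by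
  have h : (TensorProduct.assoc ℂ _ _ _).toLinearMap ∘ₗ TensorProduct.map Δ LinearMap.id ∘ₗ
        gmul (Δ (word q [i]))
      = mulLeftTriple gmul Δ (Δ (word q [i])) ∘ₗ (TensorProduct.assoc ℂ _ _ _).toLinearMap ∘ₗ
        TensorProduct.map Δ LinearMap.id :=
    linearMap_ext_wordTensor fun u v => by
      simp only [LinearMap.comp_apply, LinearEquiv.coe_coe, map_tmul, LinearMap.id_coe, id_eq]
      rw [← assoc_gmul_delta_tmul_of_mem_span hgmul hΔ hi
        (hΔ.word_mem_span_wordTensors hgmul u) v]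
      conv_lhs => rw [hΔ.map_word_singleton hi]
      simp [hgmul.word, word_cons' _ u, hΔ.map_mul]
  simpa [word_singleton] using LinearMap.congr_fun h t

theorem IsCoproduct.coassoc (hgmul : IsGradedMul gmul) (hΔ : IsCoproduct gmul Δ) :
    (TensorProduct.assoc ℂ (Aq q) (Aq q) (Aq q)).toLinearMap.comp
        ((TensorProduct.map Δ LinearMap.id).comp Δ)
      = (TensorProduct.map LinearMap.id Δ).comp Δ := by
  refine linearMap_ext_of_gen_mul (fun i => mulLeftTriple gmul Δ (Δ (gen q i)))
    (by simp [hΔ.map_one]) (fun i a => ?_) fun i a => ?_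
  · simp only [LinearMap.comp_apply, LinearEquiv.coe_coe, hΔ.map_mul]
    rcases eq_or_ne i 0 with rfl | hi
    · exact assoc_rTensor_delta_gmul_X hgmul hΔ.map_mul hΔ.map_X _
    · exact assoc_rTensor_delta_gmul_of_ne_zero hgmul hΔ hi _
  · simp only [LinearMap.comp_apply, hΔ.map_mul]
    exact lTensor_delta_gmul hgmul hΔ.map_mul _ _

end Coassociativity

end DGQS

open DGQS in
theorem statement6_general (q : ℂ)
    -- the graded multiplication on `A_q ⊗ A_q`
    (gmul : (Aq q ⊗[ℂ] Aq q) →ₗ[ℂ] (Aq q ⊗[ℂ] Aq q) →ₗ[ℂ] (Aq q ⊗[ℂ] Aq q))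
    (hgmul : ∀ {γ δ : ZMod 2 × ZMod 2} {b c : Aq q},
      b ∈ grading q γ → c ∈ grading q δ → ∀ a d : Aq q,
        gmul (a ⊗ₜ[ℂ] b) (c ⊗ₜ[ℂ] d) = gsign γ δ • ((a * c) ⊗ₜ[ℂ] (b * d)))
    -- the coproduct `Δ`, an algebra morphism into the graded tensor product
    (Δ : Aq q →ₗ[ℂ] Aq q ⊗[ℂ] Aq q)
    (hΔone : Δ 1 = 1 ⊗ₜ[ℂ] 1)
    (hΔmul : ∀ a b : Aq q, Δ (a * b) = gmul (Δ a) (Δ b))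
    (hΔx : Δ (X q) = X q ⊗ₜ[ℂ] X q)
    (hΔξ : Δ (Xi q) = X q ⊗ₜ[ℂ] Xi q + Xi q ⊗ₜ[ℂ] X q)
    (hΔθ : Δ (Th q) = X q ⊗ₜ[ℂ] Th q + Th q ⊗ₜ[ℂ] X q)
    (hΔz : Δ (Zg q) = X q ⊗ₜ[ℂ] Zg q + Zg q ⊗ₜ[ℂ] X q)
    -- the counit `ε`, an algebra morphism
    (ε : Aq q →ₐ[ℂ] ℂ)
    (hεx : ε (X q) = 1) (hεξ : ε (Xi q) = 0) (hεθ : ε (Th q) = 0) (hεz : ε (Zg q) = 0)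
    -- the graded interchange map `σ`
    (σ : Aq q ⊗[ℂ] Aq q →ₗ[ℂ] Aq q ⊗[ℂ] Aq q)
    (hσ : ∀ {γ δ : ZMod 2 × ZMod 2} {a b : Aq q},
      a ∈ grading q γ → b ∈ grading q δ → σ (a ⊗ₜ[ℂ] b) = gsign γ δ • (b ⊗ₜ[ℂ] a)) :
    -- coassociativity
    (TensorProduct.assoc ℂ (Aq q) (Aq q) (Aq q)).toLinearMap.comp
        ((TensorProduct.map Δ LinearMap.id).comp Δ)
      = (TensorProduct.map LinearMap.id Δ).comp Δ ∧
    -- the counit axiom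
    (TensorProduct.lid ℂ (Aq q)).toLinearMap.comp
        ((TensorProduct.map ε.toLinearMap LinearMap.id).comp Δ) = LinearMap.id ∧
    (TensorProduct.rid ℂ (Aq q)).toLinearMap.comp
        ((TensorProduct.map LinearMap.id ε.toLinearMap).comp Δ) = LinearMap.id ∧
    -- cocommutativity
    σ.comp Δ = Δ := by
  have forall_ne_zero {P : Fin 4 → Prop} (h₁ : P 1) (h₂ : P 2) (h₃ : P 3) : ∀ i ≠ 0, P i := by
    intro i hi
    fin_cases i
    exacts [absurd rfl hi, h₁, h₂, h₃]
  have hΔ : IsCoproduct gmul Δ := ⟨hΔone, hΔmul, hΔx, forall_ne_zero hΔξ hΔθ hΔz⟩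
  have hε := forall_ne_zero (P := fun i => ε (gen q i) = 0) hεξ hεθ hεz
  exact ⟨hΔ.coassoc @hgmul, lid_counit_comp_delta @hgmul hΔ hεx hε,
    rid_counit_comp_delta @hgmul hΔ hεx hε, IsGradedFlip.comp_delta @hσ @hgmul hΔ⟩

open DGQS in
theorem statement6 (q : ℂ) (hq : q ≠ 0) (hqroot : ∀ n : ℕ, 0 < n → q ^ n ≠ 1)
    -- the graded multiplication on `A_q ⊗ A_q`
    (gmul : (Aq q ⊗[ℂ] Aq q) →ₗ[ℂ] (Aq q ⊗[ℂ] Aq q) →ₗ[ℂ] (Aq q ⊗[ℂ] Aq q))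
    (hgmul : ∀ {γ δ : ZMod 2 × ZMod 2} {b c : Aq q},
      b ∈ grading q γ → c ∈ grading q δ → ∀ a d : Aq q,
        gmul (a ⊗ₜ[ℂ] b) (c ⊗ₜ[ℂ] d) = gsign γ δ • ((a * c) ⊗ₜ[ℂ] (b * d)))
    -- the coproduct `Δ`, an algebra morphism into the graded tensor product
    (Δ : Aq q →ₗ[ℂ] Aq q ⊗[ℂ] Aq q)
    (hΔone : Δ 1 = 1 ⊗ₜ[ℂ] 1)
    (hΔmul : ∀ a b : Aq q, Δ (a * b) = gmul (Δ a) (Δ b))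
    (hΔx : Δ (X q) = X q ⊗ₜ[ℂ] X q)
    (hΔξ : Δ (Xi q) = X q ⊗ₜ[ℂ] Xi q + Xi q ⊗ₜ[ℂ] X q)
    (hΔθ : Δ (Th q) = X q ⊗ₜ[ℂ] Th q + Th q ⊗ₜ[ℂ] X q)
    (hΔz : Δ (Zg q) = X q ⊗ₜ[ℂ] Zg q + Zg q ⊗ₜ[ℂ] X q)
    -- the counit `ε`, an algebra morphism
    (ε : Aq q →ₐ[ℂ] ℂ)
    (hεx : ε (X q) = 1) (hεξ : ε (Xi q) = 0) (hεθ : ε (Th q) = 0) (hεz : ε (Zg q) = 0)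
    -- the graded interchange map `σ`
    (σ : Aq q ⊗[ℂ] Aq q →ₗ[ℂ] Aq q ⊗[ℂ] Aq q)
    (hσ : ∀ {γ δ : ZMod 2 × ZMod 2} {a b : Aq q},
      a ∈ grading q γ → b ∈ grading q δ → σ (a ⊗ₜ[ℂ] b) = gsign γ δ • (b ⊗ₜ[ℂ] a)) :
    -- coassociativity
    (TensorProduct.assoc ℂ (Aq q) (Aq q) (Aq q)).toLinearMap.comp
        ((TensorProduct.map Δ LinearMap.id).comp Δ)
      = (TensorProduct.map LinearMap.id Δ).comp Δ ∧
    -- the counit axiom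
    (TensorProduct.lid ℂ (Aq q)).toLinearMap.comp
        ((TensorProduct.map ε.toLinearMap LinearMap.id).comp Δ) = LinearMap.id ∧
    (TensorProduct.rid ℂ (Aq q)).toLinearMap.comp
        ((TensorProduct.map LinearMap.id ε.toLinearMap).comp Δ) = LinearMap.id ∧
    -- cocommutativity
    σ.comp Δ = Δ :=
  statement6_general q gmul hgmul Δ hΔone hΔmul hΔx hΔξ hΔθ hΔz ε hεx hεξ hεθ hεz σ hσ
end

section
/- In the extended double-graded quantum superplane algebra Ā_q, the graded antihomomorphism S with S(x) = x⁻¹, S(x⁻¹) = x, S(ξ) = −x⁻¹ξx⁻¹, S(θ) = −x⁻¹θx⁻¹, S(z) = −x⁻¹zx⁻¹ is involutive: S²(x) = x, S²(x⁻¹) = x⁻¹, S²(ξ) = ξ, S²(θ) = θ and S²(z) = z; hence S² = Id on Ā_q. -/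
/-!
STATEMENT 9: In the extended double-graded quantum superplane algebra `Ā_q`, the graded
antihomomorphism `S` (i.e. the `ℂ`-linear map with `S(1) = 1` and
`S(ab) = (−1)^{⟨deg a, deg b⟩} S(b)S(a)` on homogeneous elements) with `S(x) = x⁻¹`,
`S(x⁻¹) = x`, `S(ξ) = −x⁻¹ξx⁻¹`, `S(θ) = −x⁻¹θx⁻¹`, `S(z) = −x⁻¹zx⁻¹` is involutive:
`S²(x) = x`, `S²(x⁻¹) = x⁻¹`, `S²(ξ) = ξ`, `S²(θ) = θ` and `S²(z) = z`; hence
`S² = Id` on `Ā_q`.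
-/
open scoped TensorProduct

namespace DGQSext

/-- The standard scalar product `⟨(a,b),(a',b')⟩ = aa' + bb'` on `ℤ₂ × ℤ₂`. -/
def pair2 (γ δ : ZMod 2 × ZMod 2) : ZMod 2 := γ.1 * δ.1 + γ.2 * δ.2

/-- The sign `(−1)^{⟨γ,δ⟩}`. -/
noncomputable def gsign (γ δ : ZMod 2 × ZMod 2) : ℂ := (-1 : ℂ) ^ (pair2 γ δ).val

/-- The defining relations of the extended double-graded quantum superplane, imposed on the
free algebra on five generators `x = ι 0`, `x⁻¹ = ι 1`, `ξ = ι 2`, `θ = ι 3`, `z = ι 4`: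
`xξ = q ξx`, `xθ = q θx`, `xz = zx`, `ξ² = 0`, `θ² = 0`, `ξθ = θξ`, `ξz = −q⁻¹ zξ`,
`θz = −q⁻¹ zθ`, `xx⁻¹ = x⁻¹x = 1`, `x⁻¹ξ = q⁻¹ ξx⁻¹`, `x⁻¹θ = q⁻¹ θx⁻¹`, `x⁻¹z = zx⁻¹`. -/
inductive Rel (q : ℂ) : FreeAlgebra ℂ (Fin 5) → FreeAlgebra ℂ (Fin 5) → Prop
  | x_xi : Rel q (FreeAlgebra.ι ℂ (0 : Fin 5) * FreeAlgebra.ι ℂ (2 : Fin 5))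
      (q • (FreeAlgebra.ι ℂ (2 : Fin 5) * FreeAlgebra.ι ℂ (0 : Fin 5)))
  | x_th : Rel q (FreeAlgebra.ι ℂ (0 : Fin 5) * FreeAlgebra.ι ℂ (3 : Fin 5))
      (q • (FreeAlgebra.ι ℂ (3 : Fin 5) * FreeAlgebra.ι ℂ (0 : Fin 5)))
  | x_z : Rel q (FreeAlgebra.ι ℂ (0 : Fin 5) * FreeAlgebra.ι ℂ (4 : Fin 5))
      (FreeAlgebra.ι ℂ (4 : Fin 5) * FreeAlgebra.ι ℂ (0 : Fin 5))
  | xi_sq : Rel q (FreeAlgebra.ι ℂ (2 : Fin 5) * FreeAlgebra.ι ℂ (2 : Fin 5)) 0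
  | th_sq : Rel q (FreeAlgebra.ι ℂ (3 : Fin 5) * FreeAlgebra.ι ℂ (3 : Fin 5)) 0
  | xi_th : Rel q (FreeAlgebra.ι ℂ (2 : Fin 5) * FreeAlgebra.ι ℂ (3 : Fin 5))
      (FreeAlgebra.ι ℂ (3 : Fin 5) * FreeAlgebra.ι ℂ (2 : Fin 5))
  | xi_z : Rel q (FreeAlgebra.ι ℂ (2 : Fin 5) * FreeAlgebra.ι ℂ (4 : Fin 5))
      ((-q⁻¹) • (FreeAlgebra.ι ℂ (4 : Fin 5) * FreeAlgebra.ι ℂ (2 : Fin 5)))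
  | th_z : Rel q (FreeAlgebra.ι ℂ (3 : Fin 5) * FreeAlgebra.ι ℂ (4 : Fin 5))
      ((-q⁻¹) • (FreeAlgebra.ι ℂ (4 : Fin 5) * FreeAlgebra.ι ℂ (3 : Fin 5)))
  | x_xinv : Rel q (FreeAlgebra.ι ℂ (0 : Fin 5) * FreeAlgebra.ι ℂ (1 : Fin 5)) 1
  | xinv_x : Rel q (FreeAlgebra.ι ℂ (1 : Fin 5) * FreeAlgebra.ι ℂ (0 : Fin 5)) 1
  | xinv_xi : Rel q (FreeAlgebra.ι ℂ (1 : Fin 5) * FreeAlgebra.ι ℂ (2 : Fin 5))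
      (q⁻¹ • (FreeAlgebra.ι ℂ (2 : Fin 5) * FreeAlgebra.ι ℂ (1 : Fin 5)))
  | xinv_th : Rel q (FreeAlgebra.ι ℂ (1 : Fin 5) * FreeAlgebra.ι ℂ (3 : Fin 5))
      (q⁻¹ • (FreeAlgebra.ι ℂ (3 : Fin 5) * FreeAlgebra.ι ℂ (1 : Fin 5)))
  | xinv_z : Rel q (FreeAlgebra.ι ℂ (1 : Fin 5) * FreeAlgebra.ι ℂ (4 : Fin 5))
      (FreeAlgebra.ι ℂ (4 : Fin 5) * FreeAlgebra.ι ℂ (1 : Fin 5))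

/-- The algebra of polynomials on the extended double-graded quantum superplane. -/
abbrev Abar (q : ℂ) : Type := RingQuot (Rel q)

/-- The generators of `Ā_q`. -/
noncomputable def gen (q : ℂ) (i : Fin 5) : Abar q :=
  RingQuot.mkAlgHom ℂ (Rel q) (FreeAlgebra.ι ℂ i)

/-- The generator `x`, of degree `(0,0)`. -/
noncomputable def X (q : ℂ) : Abar q := gen q 0
/-- The generator `x⁻¹`, of degree `(0,0)`. -/
noncomputable def Xinv (q : ℂ) : Abar q := gen q 1
/-- The generator `ξ`, of degree `(0,1)`. -/
noncomputable def Xi (q : ℂ) : Abar q := gen q 2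
/-- The generator `θ`, of degree `(1,0)`. -/
noncomputable def Th (q : ℂ) : Abar q := gen q 3
/-- The generator `z`, of degree `(1,1)`. -/
noncomputable def Zg (q : ℂ) : Abar q := gen q 4

/-- The `ℤ₂ × ℤ₂`-degrees of the generators. -/
def dg : Fin 5 → ZMod 2 × ZMod 2 := ![(0, 0), (0, 0), (0, 1), (1, 0), (1, 1)]

/-- The homogeneous component of degree `γ` of `Ā_q`: the span of the images of the
words in the generators of total degree `γ`. -/
noncomputable def grading (q : ℂ) (γ : ZMod 2 × ZMod 2) : Submodule ℂ (Abar q) :=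
  Submodule.span ℂ
    { a | ∃ w : List (Fin 5), (w.map dg).sum = γ ∧ a = (w.map (gen q)).prod }

end DGQSext

/-!
Since the pairing on `ℤ₂ × ℤ₂` is symmetric, the two signs produced by applying `S` twice to a
product `ab` of homogeneous elements cancel, so `S²(ab) = S²(a) S²(b)` as soon as `S(a)` and
`S(b)` are homogeneous of the degrees of `a` and `b`. Words in the generators span `Ā_q`, so it
suffices to check `S² = id` on generators. For `x` and `x⁻¹` this is immediate; for an odd
generator `g`, `S(x⁻¹ g x⁻¹) = S(x⁻¹) S(g) S(x⁻¹) = -x x⁻¹ g x⁻¹ x = -g`.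
-/

namespace DGQSext

variable {q : ℂ}

theorem word_mem_grading (w : List (Fin 5)) :
    (w.map (gen q)).prod ∈ grading q (w.map dg).sum :=
  Submodule.subset_span ⟨w, rfl, rfl⟩

theorem gen_mem_grading (i : Fin 5) : gen q i ∈ grading q (dg i) := by
  simpa using word_mem_grading (q := q) [i]

theorem mul_mem_grading {γ δ : ZMod 2 × ZMod 2} {a b : Abar q}
    (ha : a ∈ grading q γ) (hb : b ∈ grading q δ) : a * b ∈ grading q (γ + δ) := by
  have hle : grading q γ * grading q δ ≤ grading q (γ + δ) := by
    rw [grading, grading, Submodule.span_mul_span, Submodule.span_le]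
    rintro _ ⟨_, ⟨v, rfl, rfl⟩, _, ⟨w, rfl, rfl⟩, rfl⟩
    exact Submodule.subset_span ⟨v ++ w, by simp, by simp⟩
  exact hle (Submodule.mul_mem_mul ha hb)

theorem span_words_eq_top :
    Submodule.span ℂ (Set.range fun w : List (Fin 5) => (w.map (gen q)).prod) = ⊤ := by
  have hadjoin : Algebra.adjoin ℂ (Set.range (gen q)) = ⊤ := by
    rw [show Set.range (gen q) = RingQuot.mkAlgHom ℂ (Rel q) '' Set.range (FreeAlgebra.ι ℂ) by
        rw [← Set.range_comp]; rfl,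
      ← AlgHom.map_adjoin, FreeAlgebra.adjoin_range_ι, Algebra.map_top,
      AlgHom.range_eq_top]
    exact RingQuot.mkAlgHom_surjective ℂ (Rel q)
  have hclosure : (Submonoid.closure (Set.range (gen q)) : Set (Abar q)) ⊆
      Set.range fun w : List (Fin 5) => (w.map (gen q)).prod := by
    intro a ha
    induction ha using Submonoid.closure_induction with
    | mem _ h => obtain ⟨i, rfl⟩ := h; exact ⟨[i], by simp⟩
    | one => exact ⟨[], by simp⟩
    | mul _ _ _ _ ha hb =>
      obtain ⟨v, rfl⟩ := ha
      obtain ⟨w, rfl⟩ := hb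
      exact ⟨v ++ w, by simp⟩
  have hspan := Algebra.toSubmodule_eq_top.2 hadjoin
  rw [Algebra.adjoin_eq_span] at hspan
  exact top_le_iff.1 (hspan ▸ Submodule.span_mono hclosure)

theorem gsign_zero_left (γ : ZMod 2 × ZMod 2) : gsign 0 γ = 1 := by
  simp [gsign, pair2]

theorem gsign_zero_right (γ : ZMod 2 × ZMod 2) : gsign γ 0 = 1 := by
  simp [gsign, pair2]

theorem gsign_mul_gsign_swap (γ δ : ZMod 2 × ZMod 2) : gsign γ δ * gsign δ γ = 1 := by
  rw [gsign, gsign, show pair2 δ γ = pair2 γ δ by unfold pair2; ring, ← mul_pow]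
  norm_num

theorem X_mul_Xinv : X q * Xinv q = 1 := by
  simpa [X, Xinv, gen] using RingQuot.mkAlgHom_rel ℂ (Rel.x_xinv (q := q))

theorem Xinv_mul_X : Xinv q * X q = 1 := by
  simpa [X, Xinv, gen] using RingQuot.mkAlgHom_rel ℂ (Rel.xinv_x (q := q))

def IsGradedAntihom (S : Abar q →ₗ[ℂ] Abar q) : Prop :=
  ∀ {γ δ : ZMod 2 × ZMod 2} {a b : Abar q},
    a ∈ grading q γ → b ∈ grading q δ → S (a * b) = gsign γ δ • (S b * S a)

namespace IsGradedAntihom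

variable {S : Abar q →ₗ[ℂ] Abar q}

theorem apply_apply_mul (hS : IsGradedAntihom S) {γ δ : ZMod 2 × ZMod 2} {a b : Abar q}
    (ha : a ∈ grading q γ) (hb : b ∈ grading q δ)
    (hSa : S a ∈ grading q γ) (hSb : S b ∈ grading q δ)
    (hSSa : S (S a) = a) (hSSb : S (S b) = b) :
    S (a * b) ∈ grading q (γ + δ) ∧ S (S (a * b)) = a * b := by
  rw [hS ha hb]
  constructor
  · exact Submodule.smul_mem _ _ (add_comm δ γ ▸ mul_mem_grading hSb hSa)
  · rw [map_smul, hS hSb hSa, hSSa, hSSb, smul_smul, gsign_mul_gsign_swap, one_smul]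

theorem apply_apply_of_eq_neg_conj (hS : IsGradedAntihom S) (hSxinv : S (Xinv q) = X q)
    {γ : ZMod 2 × ZMod 2} {g : Abar q} (hg : g ∈ grading q γ)
    (hSg : S g = -(Xinv q * g * Xinv q)) :
    S g ∈ grading q γ ∧ S (S g) = g := by
  have hXinv : Xinv q ∈ grading q 0 := gen_mem_grading 1
  have hleft : S (Xinv q * g) = -(Xinv q * g) := by
    rw [hS hXinv hg, hSg, hSxinv, gsign_zero_left, one_smul, neg_mul (Xinv q * g * Xinv q),
      mul_assoc _ (Xinv q), Xinv_mul_X, mul_one]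
  have hconj : S (Xinv q * g * Xinv q) = -g := by
    rw [hS (mul_mem_grading hXinv hg) hXinv, gsign_zero_right, one_smul, hleft, hSxinv,
      mul_neg (X q), ← mul_assoc, X_mul_Xinv, one_mul]
  constructor
  · rw [hSg]
    simpa using Submodule.neg_mem _ (mul_mem_grading (mul_mem_grading hXinv hg) hXinv)
  · rw [hSg, map_neg, hconj, neg_neg]

theorem apply_apply_gen (hS : IsGradedAntihom S) (hSx : S (X q) = Xinv q)
    (hSxinv : S (Xinv q) = X q) (hSξ : S (Xi q) = -(Xinv q * Xi q * Xinv q))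
    (hSθ : S (Th q) = -(Xinv q * Th q * Xinv q)) (hSz : S (Zg q) = -(Xinv q * Zg q * Xinv q))
    (i : Fin 5) : S (gen q i) ∈ grading q (dg i) ∧ S (S (gen q i)) = gen q i := by
  fin_cases i
  · change S (X q) ∈ grading q (dg 1) ∧ S (S (X q)) = X q
    rw [hSx, hSxinv]
    exact ⟨gen_mem_grading 1, rfl⟩
  · change S (Xinv q) ∈ grading q (dg 0) ∧ S (S (Xinv q)) = Xinv q
    rw [hSxinv, hSx]
    exact ⟨gen_mem_grading 0, rfl⟩
  · exact hS.apply_apply_of_eq_neg_conj hSxinv (gen_mem_grading 2) hSξ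
  · exact hS.apply_apply_of_eq_neg_conj hSxinv (gen_mem_grading 3) hSθ
  · exact hS.apply_apply_of_eq_neg_conj hSxinv (gen_mem_grading 4) hSz

theorem comp_self_eq_id (hS : IsGradedAntihom S) (hS1 : S 1 = 1)
    (hgen : ∀ i, S (gen q i) ∈ grading q (dg i) ∧ S (S (gen q i)) = gen q i) :
    S ∘ₗ S = LinearMap.id := by
  have hword (w : List (Fin 5)) : S (w.map (gen q)).prod ∈ grading q (w.map dg).sum ∧
      S (S (w.map (gen q)).prod) = (w.map (gen q)).prod := by
    induction w with
    | nil => simpa [hS1] using word_mem_grading (q := q) []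
    | cons i w ih =>
      simpa using hS.apply_apply_mul (gen_mem_grading i) (word_mem_grading w) (hgen i).1 ih.1
        (hgen i).2 ih.2
  refine LinearMap.ext_on span_words_eq_top ?_
  rintro _ ⟨w, rfl⟩
  exact (hword w).2

end IsGradedAntihom

end DGQSext

open DGQSext in
theorem statement9_general (q : ℂ)
    (S : Abar q →ₗ[ℂ] Abar q)
    (hSone : S 1 = 1)
    (hSanti : ∀ {γ δ : ZMod 2 × ZMod 2} {a b : Abar q},
      a ∈ grading q γ → b ∈ grading q δ → S (a * b) = gsign γ δ • (S b * S a))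
    (hSx : S (X q) = Xinv q)
    (hSxinv : S (Xinv q) = X q)
    (hSξ : S (Xi q) = -(Xinv q * Xi q * Xinv q))
    (hSθ : S (Th q) = -(Xinv q * Th q * Xinv q))
    (hSz : S (Zg q) = -(Xinv q * Zg q * Xinv q)) :
    S (S (X q)) = X q ∧ S (S (Xinv q)) = Xinv q ∧ S (S (Xi q)) = Xi q ∧
    S (S (Th q)) = Th q ∧ S (S (Zg q)) = Zg q ∧
    ∀ a : Abar q, S (S a) = a := by
  have hS : IsGradedAntihom S := hSanti
  have hgen := hS.apply_apply_gen hSx hSxinv hSξ hSθ hSz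
  exact ⟨(hgen 0).2, (hgen 1).2, (hgen 2).2, (hgen 3).2, (hgen 4).2,
    LinearMap.congr_fun (hS.comp_self_eq_id hSone hgen)⟩

open DGQSext in
theorem statement9 (q : ℂ) (hq : q ≠ 0) (hqroot : ∀ n : ℕ, 0 < n → q ^ n ≠ 1)
    (S : Abar q →ₗ[ℂ] Abar q)
    (hSone : S 1 = 1)
    (hSanti : ∀ {γ δ : ZMod 2 × ZMod 2} {a b : Abar q},
      a ∈ grading q γ → b ∈ grading q δ → S (a * b) = gsign γ δ • (S b * S a))
    (hSx : S (X q) = Xinv q)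
    (hSxinv : S (Xinv q) = X q)
    (hSξ : S (Xi q) = -(Xinv q * Xi q * Xinv q))
    (hSθ : S (Th q) = -(Xinv q * Th q * Xinv q))
    (hSz : S (Zg q) = -(Xinv q * Zg q * Xinv q)) :
    S (S (X q)) = X q ∧ S (S (Xinv q)) = Xinv q ∧ S (S (Xi q)) = Xi q ∧
    S (S (Th q)) = Th q ∧ S (S (Zg q)) = Zg q ∧
    ∀ a : Abar q, S (S a) = a :=
  statement9_general q S hSone hSanti hSx hSxinv hSξ hSθ hSz
end
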